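/- Let k be an algebraically closed field, n ≥ 5, and let F ∈ k[X_0, …, X_n] be a cubic form defining a smooth cubic hypersurface (F has no nonzero zero at which all partial derivatives vanish). Then the intersection of {F = 0} with any two hyperplanes is reduced: for any two linearly independent linear forms L_1, L_2 over k, the restriction of F to the codimension-2 linear subspace {L_1 = L_2 = 0} (i.e. F ∘ ι for any linear isomorphism ι : k^{n-1} → {L_1 = L_2 = 0} ⊂ k^{n+1}) is a squarefree cubic form, i.e. not divisible by the square of any nonconstant polynomial. -/

import Mathlib

/-!
If the restriction `G = F ∘ A` of `F` to `W = im A` is not squarefree, then `G = h² r` with `h`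
homogeneous of positive degree, so `G` is singular along the cone `{h = 0}`. Choose `v₁, v₂`
spanning a complement of `W`. The three forms `h`, `∂_{v₁}F ∘ A`, `∂_{v₂}F ∘ A` in `n - 1 ≥ 4`
variables have a common nonzero zero `y` (Krull's height theorem and the Nullstellensatz). At
`x = A y` the gradient of `F` kills `W` (chain rule) as well as `v₁` and `v₂`, so `x` is a singular
point of `{F = 0}`.
-/

open MvPolynomial
open scoped Matrix

lemma LinearIndependent.exists_sup_span_eq_top {K V ι : Type*} [DivisionRing K] [AddCommGroup V]
    [Module K V] [FiniteDimensional K V] [Fintype ι] {u : ι → V} (hu : LinearIndependent K u)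
    {r : ℕ} (hr : Fintype.card ι + r = Module.finrank K V) :
    ∃ v : Fin r → V, Submodule.span K (Set.range u) ⊔ Submodule.span K (Set.range v) = ⊤ := by
  obtain ⟨W, hW⟩ := (Submodule.span K (Set.range u)).exists_isCompl
  have hWr : Module.finrank K W = r := by
    have := Submodule.finrank_add_eq_of_isCompl hW
    rw [finrank_span_eq_card hu] at this
    omega
  let b := Module.finBasisOfFinrankEq K W hWr
  refine ⟨W.subtype ∘ b, ?_⟩
  have hspan : Submodule.span K (Set.range (W.subtype ∘ b)) = W := by
    rw [Set.range_comp, Submodule.span_image, b.span_eq, Submodule.map_subtype_top]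
  rw [hspan, hW.sup_eq_top]

lemma eq_zero_of_forall_dotProduct_eq_zero {R σ : Type*} [CommSemiring R] [Fintype σ]
    [DecidableEq σ] {g : σ → R} {s : Set (σ → R)} (hs : Submodule.span R s = ⊤)
    (h : ∀ w ∈ s, w ⬝ᵥ g = 0) : g = 0 := by
  apply (dotProductEquiv R σ).injective
  rw [map_zero]
  exact LinearMap.ext_on hs fun w hw => by simpa [dotProduct_comm] using h w hw

namespace MvPolynomial

section CommSemiring

variable {R σ τ : Type*} [CommSemiring R]

lemma IsHomogeneous.constantCoeff_eq_zero {φ : MvPolynomial σ R} {n : ℕ}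
    (hφ : φ.IsHomogeneous n) (hn : n ≠ 0) : constantCoeff φ = 0 := by
  rw [constantCoeff_eq]
  exact hφ.coeff_eq_zero (by simpa using hn.symm)

lemma homogeneousComponent_add_mul {a b : MvPolynomial σ R} {m n : ℕ}
    (ha : a.totalDegree ≤ m) (hb : b.totalDegree ≤ n) :
    homogeneousComponent (m + n) (a * b) =
      homogeneousComponent m a * homogeneousComponent n b := by
  classical
  ext u
  rw [coeff_homogeneousComponent]
  split_ifs with hu
  · rw [coeff_mul, coeff_mul]
    refine Finset.sum_congr rfl fun ⟨v, w⟩ hvw => ?_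
    rw [Finset.HasAntidiagonal.mem_antidiagonal] at hvw
    have hdeg : v.degree + w.degree = m + n := by rw [← map_add, hvw, hu]
    simp only [coeff_homogeneousComponent]
    rcases lt_trichotomy v.degree m with hv | hv | hv
    · rw [coeff_eq_zero_of_totalDegree_lt (by omega : b.totalDegree < w.degree)]
      simp [show w.degree ≠ n by omega]
    · simp [hv, show w.degree = n by omega]
    · rw [coeff_eq_zero_of_totalDegree_lt (by omega : a.totalDegree < v.degree)]
      simp [hv.ne']
  · exact (((homogeneousComponent_isHomogeneous m a).mul
      (homogeneousComponent_isHomogeneous n b)).coeff_eq_zero hu).symm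

def IsSingularPoint (F : MvPolynomial σ R) (x : σ → R) : Prop :=
  eval x F = 0 ∧ ∀ i, eval x (pderiv i F) = 0

lemma isSingularPoint_mul_self_mul {h r : MvPolynomial σ R} {y : σ → R} (hy : eval y h = 0) :
    IsSingularPoint (h * h * r) y :=
  ⟨by simp [hy], fun j => by simp [Derivation.leibniz, hy]⟩

lemma pderiv_aeval [Fintype σ] [DecidableEq σ] (g : σ → MvPolynomial τ R)
    (P : MvPolynomial σ R) (j : τ) :
    pderiv j (aeval g P) = ∑ i, aeval g (pderiv i P) * pderiv j (g i) := by
  induction P using MvPolynomial.induction_on with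
  | C a => simp
  | add p q hp hq => simp only [map_add, hp, hq, add_mul, Finset.sum_add_distrib]
  | mul_X p i hp =>
    rw [map_mul, aeval_X, Derivation.leibniz, hp, smul_eq_mul, smul_eq_mul, Finset.mul_sum]
    simp_rw [Derivation.leibniz, pderiv_X, smul_eq_mul, map_add, map_mul, aeval_X, add_mul,
      Finset.sum_add_distrib, Pi.single_apply, apply_ite (aeval g), map_one, map_zero, mul_ite,
      mul_one, mul_zero, ite_mul, zero_mul, Finset.sum_ite_eq, Finset.mem_univ, if_true]
    simp only [mul_assoc]

noncomputable def dirDeriv [Fintype σ] (v : σ → R) (F : MvPolynomial σ R) : MvPolynomial σ R :=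
  ∑ i, v i • pderiv i F

lemma eval_dirDeriv [Fintype σ] (v x : σ → R) (F : MvPolynomial σ R) :
    eval x (dirDeriv v F) = v ⬝ᵥ fun i => eval x (pderiv i F) := by
  simp [dirDeriv, dotProduct, smul_eq_C_mul]

lemma IsHomogeneous.dirDeriv [Fintype σ] {F : MvPolynomial σ R} {n : ℕ}
    (hF : F.IsHomogeneous n) (v : σ → R) : (dirDeriv v F).IsHomogeneous (n - 1) :=
  IsHomogeneous.sum _ _ _ fun i _ => by
    rw [smul_eq_C_mul]
    exact hF.pderiv.C_mul _

noncomputable def linearSubst [Fintype τ] (A : Matrix σ τ R) :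
    MvPolynomial σ R →ₐ[R] MvPolynomial τ R :=
  aeval fun i => ∑ j, C (A i j) * X j

variable [Fintype τ] (A : Matrix σ τ R)

lemma eval_linearSubst (P : MvPolynomial σ R) (y : τ → R) :
    eval y (linearSubst A P) = eval (A *ᵥ y) P := by
  have hsubst : (fun i => eval y (∑ j, C (A i j) * X j)) = A *ᵥ y :=
    _root_.funext fun i => by simp [Matrix.mulVec, dotProduct, mul_comm]
  rw [linearSubst, aeval_eq_bind₁, ← hsubst]
  exact eval₂Hom_bind₁ (RingHom.id R) y _ P

lemma constantCoeff_linearSubst (P : MvPolynomial σ R) :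
    constantCoeff (linearSubst A P) = constantCoeff P := by
  rw [← eval_zero, eval_linearSubst, Matrix.mulVec_zero, eval_zero]

lemma IsHomogeneous.linearSubst {P : MvPolynomial σ R} {d : ℕ} (hP : P.IsHomogeneous d) :
    (linearSubst A P).IsHomogeneous d := by
  have := hP.aeval (fun i => ∑ j, C (A i j) * X j) fun i =>
    IsHomogeneous.sum _ _ _ fun j _ => isHomogeneous_C_mul_X (A i j) j
  rwa [one_mul] at this

lemma pderiv_linearSubst [Fintype σ] [DecidableEq σ] [DecidableEq τ] (P : MvPolynomial σ R)
    (j : τ) : pderiv j (linearSubst A P) = linearSubst A (dirDeriv (A.col j) P) := by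
  rw [linearSubst, pderiv_aeval, dirDeriv]
  simp [Pi.single_apply, smul_eq_C_mul, mul_comm]

theorem IsSingularPoint.of_linearSubst [Fintype σ] [DecidableEq σ] [DecidableEq τ]
    {F : MvPolynomial σ R} {ι : Type*} {v : ι → σ → R}
    (hv : Submodule.span R (Set.range A.col) ⊔ Submodule.span R (Set.range v) = ⊤)
    {y : τ → R} (hy : IsSingularPoint (linearSubst A F) y)
    (hvy : ∀ b, eval (A *ᵥ y) (dirDeriv (v b) F) = 0) : IsSingularPoint F (A *ᵥ y) := by
  have hgrad : (fun i => eval (A *ᵥ y) (pderiv i F)) = 0 := by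
    refine eq_zero_of_forall_dotProduct_eq_zero (s := Set.range A.col ∪ Set.range v)
      (by rw [Submodule.span_union, hv]) ?_
    rintro w (⟨j, rfl⟩ | ⟨b, rfl⟩)
    · rw [← eval_dirDeriv, ← eval_linearSubst, ← pderiv_linearSubst]
      exact hy.2 j
    · rw [← eval_dirDeriv]
      exact hvy b
  exact ⟨by rw [← eval_linearSubst]; exact hy.1, congrFun hgrad⟩

end CommSemiring

theorem card_le_height_ker_constantCoeff {R σ : Type*} [CommRing R] [IsDomain R] [Fintype σ] :
    (Fintype.card σ : ℕ∞) ≤ (RingHom.ker (constantCoeff : MvPolynomial σ R →+* R)).height := by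
  classical
  -- `RingHom.ker (kill s)` is the prime `(X i : i ∈ s)`; these form a chain of length `card σ`.
  let kill (s : Finset σ) : MvPolynomial σ R →ₐ[R] MvPolynomial σ R :=
    aeval fun i => if i ∈ s then 0 else X i
  have chain (s : Finset σ) : (s.card : ℕ∞) ≤ (RingHom.ker (kill s)).height := by
    induction s using Finset.induction_on with
    | empty => simp
    | insert i s hi ih =>
      have hcomp : (kill (insert i s)).comp (kill s) = kill (insert i s) := by
        ext j
        by_cases hj : j ∈ s <;> simp [kill, hj]
      have hlt : RingHom.ker (kill s) < RingHom.ker (kill (insert i s)) := by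
        refine lt_of_le_of_ne (fun p hp => ?_) fun h => ?_
        · rw [RingHom.mem_ker] at hp ⊢
          rw [← hcomp, AlgHom.comp_apply, hp, map_zero]
        · have : X i ∈ RingHom.ker (kill (insert i s)) := by simp [kill]
          rw [← h, RingHom.mem_ker] at this
          simp [kill, hi, X_ne_zero] at this
      have := RingHom.ker_isPrime (kill s)
      have := RingHom.ker_isPrime (kill (insert i s))
      calc ((insert i s).card : ℕ∞) = s.card + 1 := by simp [hi]
        _ ≤ (RingHom.ker (kill s)).height + 1 := by gcongr
        _ ≤ _ := Ideal.height_add_one_le_of_lt_of_isPrime hlt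
  have hker : RingHom.ker (kill Finset.univ) =
      RingHom.ker (constantCoeff : MvPolynomial σ R →+* R) := by
    ext p
    simp only [RingHom.mem_ker, kill, Finset.mem_univ, ite_true]
    rw [aeval_zero', algebraMap_eq, C_eq_zero]
  simpa [hker] using chain Finset.univ

variable {k σ : Type*} [Field k]

/-- Compare top homogeneous components in `G = p * p * q`. -/
lemma IsHomogeneous.exists_eq_mul_self_mul_of_not_squarefree {G : MvPolynomial σ k} {d : ℕ}
    (hG : G.IsHomogeneous d) (hsq : ¬Squarefree G) :
    ∃ h r : MvPolynomial σ k, constantCoeff h = 0 ∧ G = h * h * r := by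
  rcases eq_or_ne G 0 with rfl | hG0
  · exact ⟨0, 0, map_zero _, by simp⟩
  obtain ⟨p, ⟨q, rfl⟩, hp⟩ : ∃ p, p * p ∣ G ∧ ¬IsUnit p := by simpa [Squarefree] using hsq
  have hp0 : p ≠ 0 := by rintro rfl; simp at hG0
  have hq0 : q ≠ 0 := by rintro rfl; simp at hG0
  have hdeg : p.totalDegree ≠ 0 := fun h0 => hp <| by
    rw [totalDegree_eq_zero_iff_eq_C] at h0
    rw [h0]
    exact (isUnit_iff_ne_zero.mpr fun hc => hp0 (by rw [h0, hc, C_0])).map C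
  refine ⟨homogeneousComponent p.totalDegree p, homogeneousComponent q.totalDegree q,
    (homogeneousComponent_isHomogeneous _ _).constantCoeff_eq_zero hdeg, ?_⟩
  have htd : p.totalDegree + p.totalDegree + q.totalDegree = d := by
    rw [← hG.totalDegree hG0, totalDegree_mul_of_isDomain (mul_ne_zero hp0 hp0) hq0,
      totalDegree_mul_of_isDomain hp0 hp0]
  rw [← homogeneousComponent_eq_self hG, ← htd,
    homogeneousComponent_add_mul (totalDegree_mul p p) le_rfl,
    homogeneousComponent_add_mul le_rfl le_rfl]

/-- Otherwise the Nullstellensatz makes the ideal of the origin the only minimal prime over the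
`f i`, and its height `card σ` contradicts Krull's height theorem. -/
theorem exists_ne_zero_forall_eval_eq_zero [IsAlgClosed k] [Fintype σ] {ι : Type*} [Fintype ι]
    (f : ι → MvPolynomial σ k) (hf : ∀ i, constantCoeff (f i) = 0)
    (hcard : Fintype.card ι < Fintype.card σ) :
    ∃ x : σ → k, x ≠ 0 ∧ ∀ i, eval x (f i) = 0 := by
  classical
  by_contra! h
  set M := RingHom.ker (constantCoeff : MvPolynomial σ k →+* k)
  set I := Ideal.span ((Finset.univ.image f : Finset _) : Set (MvPolynomial σ k))
  have hIM : I ≤ M := Ideal.span_le.mpr (by simpa [Set.range_subset_iff, M] using hf)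
  have hrad : I.radical = M := by
    refine le_antisymm ((Ideal.IsPrime.radical_le_iff (RingHom.ker_isPrime _)).mpr hIM) ?_
    rw [← vanishingIdeal_zeroLocus_eq_radical (K := k)]
    intro p hp x hx
    have hx0 : x = 0 := by
      by_contra hx0
      obtain ⟨i, hi⟩ := h x hx0
      exact hi (by simpa using hx (f i) (Ideal.subset_span (by simp)))
    simpa [hx0, M] using hp
  have := RingHom.ker_isPrime (constantCoeff : MvPolynomial σ k →+* k)
  have hM : M ∈ I.minimalPrimes := by
    rw [← Ideal.radical_minimalPrimes, hrad, Ideal.minimalPrimes_eq_subsingleton_self]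
    rfl
  have hle : Fintype.card σ ≤ (Finset.univ.image f).card := by
    exact_mod_cast (card_le_height_ker_constantCoeff (R := k)).trans
      (Ideal.height_le_card_of_mem_minimalPrimes_span_finset hM)
  exact hcard.not_ge (hle.trans Finset.card_image_le)

end MvPolynomial

theorem smooth_cubic_intersection_two_hyperplanes_reduced_general
    (k : Type) [Field k] [IsAlgClosed k]
    (n : ℕ) (hn : 5 ≤ n)
    (F : MvPolynomial (Fin (n + 1)) k) (hF : F.IsHomogeneous 3)
    (hsmooth : ¬ ∃ a : Fin (n + 1) → k, a ≠ 0 ∧ eval a F = 0 ∧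
      ∀ i, eval a (pderiv i F) = 0)
    (A : Matrix (Fin (n + 1)) (Fin (n - 1)) k)
    (hinj : Function.Injective A.mulVec) :
    Squarefree ((aeval fun i => ∑ j, C (A i j) * X j : MvPolynomial (Fin (n + 1)) k →ₐ[k]
      MvPolynomial (Fin (n - 1)) k) F) := by
  change Squarefree (linearSubst A F)
  by_contra hsq
  obtain ⟨h, r, hh, hGh⟩ := (hF.linearSubst A).exists_eq_mul_self_mul_of_not_squarefree hsq
  obtain ⟨v, hv⟩ := (Matrix.mulVec_injective_iff.mp hinj).exists_sup_span_eq_top (r := 2)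
    (by simp only [Fintype.card_fin, Module.finrank_fin_fun]; omega)
  let Q (b : Fin 2) := linearSubst A (dirDeriv (v b) F)
  have hQ (b : Fin 2) : constantCoeff (Q b) = 0 := by
    rw [constantCoeff_linearSubst]
    exact (hF.dirDeriv (v b)).constantCoeff_eq_zero two_ne_zero
  obtain ⟨y, hy0, hy⟩ := exists_ne_zero_forall_eval_eq_zero (Fin.cons h Q : Fin 3 → _)
    (Fin.cases hh hQ) (by simp only [Fintype.card_fin]; omega)
  refine hsmooth ⟨A *ᵥ y, fun h0 => hy0 (hinj (by rw [h0, Matrix.mulVec_zero])), ?_⟩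
  refine IsSingularPoint.of_linearSubst A hv ?_ fun b => ?_
  · rw [hGh]
    exact isSingularPoint_mul_self_mul (by simpa using hy 0)
  · rw [← eval_linearSubst]
    simpa using hy b.succ

/-- Let `k` be an algebraically closed field, `n ≥ 5`, and `F` a cubic form
defining a smooth cubic hypersurface in `P^n`.  Then the intersection of `{F = 0}` with any two
hyperplanes `{L₁ = 0}`, `{L₂ = 0}` (for linearly independent linear forms `L₁, L₂`) is reduced:
the restriction of `F` along any linear parametrization `ι : k^{n-1} → {L₁ = L₂ = 0}`
(given by a matrix `A` inducing an injective linear map with image inside `{L₁ = L₂ = 0}`)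
is a squarefree cubic form. -/
theorem smooth_cubic_intersection_two_hyperplanes_reduced
    (k : Type) [Field k] [IsAlgClosed k]
    (n : ℕ) (hn : 5 ≤ n)
    (F : MvPolynomial (Fin (n + 1)) k) (hF : F.IsHomogeneous 3)
    (hsmooth : ¬ ∃ a : Fin (n + 1) → k, a ≠ 0 ∧ eval a F = 0 ∧
      ∀ i, eval a (pderiv i F) = 0)
    (L₁ L₂ : MvPolynomial (Fin (n + 1)) k)
    (hL₁ : L₁.IsHomogeneous 1) (hL₂ : L₂.IsHomogeneous 1)
    (hind : LinearIndependent k ![L₁, L₂])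
    (A : Matrix (Fin (n + 1)) (Fin (n - 1)) k)
    (hinj : Function.Injective A.mulVec)
    (himage : ∀ y : Fin (n - 1) → k, eval (A.mulVec y) L₁ = 0 ∧ eval (A.mulVec y) L₂ = 0) :
    Squarefree ((aeval fun i => ∑ j, C (A i j) * X j : MvPolynomial (Fin (n + 1)) k →ₐ[k]
      MvPolynomial (Fin (n - 1)) k) F) :=
  smooth_cubic_intersection_two_hyperplanes_reduced_general k n hn F hF hsmooth A hinj
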